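/- arXiv:1105.2017 — 4 statements merged into one kernel-verified Lean document; each statement's English description precedes it below -/
import Mathlib

section
/- The negative sum of inverse matched-filter SINRs, V(s_1,...,s_K) = −Σ_k 1/γ_k where γ_k = p_k h_{k,a(k)}² / (σ² + Σ_{j≠k} p_j h_{j,a(k)}² (s_kᵀ s_j)²), is an exact potential for the game where player k maximizes u_k(s_k, s_{-k}) = −s_kᵀ [ (σ²/(p_k h_{k,a(k)}²)) I + Σ_{j≠k} ( p_j h_{j,a(k)}²/(p_k h_{k,a(k)}²) + p_k h_{k,a(j)}²/(p_j h_{j,a(j)}²) ) s_j s_jᵀ ] s_k over unit-norm s_k: a unilateral change in s_k changes V by exactly the change in u_k. -/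
open Matrix Finset

/-- The negative sum of inverse matched-filter SINRs,
`V = −Σ_k 1/γ_k` with `γ_k = p_k h_{k,a(k)}² / (σ² + Σ_{j≠k} p_j h_{j,a(k)}² (s_kᵀs_j)²)`,
is an exact potential for the game with utilities
`u_k = −s_kᵀ[(σ²/(p_k h_{k,a(k)}²))I
      + Σ_{j≠k}(p_j h_{j,a(k)}²/(p_k h_{k,a(k)}²) + p_k h_{k,a(j)}²/(p_j h_{j,a(j)}²)) s_j s_jᵀ]s_k`
over unit-norm `s_k`: a unilateral change in `s_k` changes `V` by exactly the change
in `u_k`. -/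
theorem neg_sum_inverse_SINR_exact_potential
    {N K B : ℕ} (σ2 : ℝ) (hσ : 0 < σ2)
    (p : Fin K → ℝ) (hp : ∀ j, 0 < p j)
    (h : Fin K → Fin B → ℝ) (hh : ∀ i j, 0 < h i j)
    (a : Fin K → Fin B)
    (V : (Fin K → Fin N → ℝ) → ℝ) (u : Fin K → (Fin K → Fin N → ℝ) → ℝ)
    (hV : ∀ s, V s = -∑ m,
      (σ2 + ∑ j ∈ Finset.univ.erase m, p j * (h j (a m)) ^ 2 * (s m ⬝ᵥ s j) ^ 2) /
        (p m * (h m (a m)) ^ 2))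
    (hu : ∀ k s, u k s = -((σ2 / (p k * (h k (a k)) ^ 2)) * (s k ⬝ᵥ s k) +
      ∑ j ∈ Finset.univ.erase k,
        (p j * (h j (a k)) ^ 2 / (p k * (h k (a k)) ^ 2) +
          p k * (h k (a j)) ^ 2 / (p j * (h j (a j)) ^ 2)) * (s k ⬝ᵥ s j) ^ 2)) :
    ∀ (k : Fin K) (s : Fin K → Fin N → ℝ) (w : Fin N → ℝ),
      (∀ j, s j ⬝ᵥ s j = 1) → w ⬝ᵥ w = 1 →
      V (Function.update s k w) - V s =
        u k (Function.update s k w) - u k s := by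
  intro k s w hs hw
  set s' := Function.update s k w with hs'def
  have hs'k : s' k = w := Function.update_self k w s
  have hs'j : ∀ j, j ≠ k → s' j = s j := fun j hj => Function.update_of_ne hj w s
  -- per-row difference of the V-terms
  have key : ∀ m : Fin K,
      (σ2 + ∑ j ∈ Finset.univ.erase m, p j * (h j (a m)) ^ 2 * (s' m ⬝ᵥ s' j) ^ 2) /
          (p m * (h m (a m)) ^ 2)
        - (σ2 + ∑ j ∈ Finset.univ.erase m, p j * (h j (a m)) ^ 2 * (s m ⬝ᵥ s j) ^ 2) /
          (p m * (h m (a m)) ^ 2)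
      = ∑ j ∈ Finset.univ.erase m,
          p j * (h j (a m)) ^ 2 / (p m * (h m (a m)) ^ 2) *
            ((s' m ⬝ᵥ s' j) ^ 2 - (s m ⬝ᵥ s j) ^ 2) := by
    intro m
    rw [div_sub_div_same]
    have hnum : σ2 + (∑ j ∈ Finset.univ.erase m, p j * (h j (a m)) ^ 2 * (s' m ⬝ᵥ s' j) ^ 2)
        - (σ2 + ∑ j ∈ Finset.univ.erase m, p j * (h j (a m)) ^ 2 * (s m ⬝ᵥ s j) ^ 2)
      = ∑ j ∈ Finset.univ.erase m,
          p j * (h j (a m)) ^ 2 * ((s' m ⬝ᵥ s' j) ^ 2 - (s m ⬝ᵥ s j) ^ 2) := by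
      simp only [mul_sub]
      rw [Finset.sum_sub_distrib]
      ring
    rw [hnum, Finset.sum_div]
    exact Finset.sum_congr rfl fun j _ => by ring
  -- rows m ≠ k reduce to the single j = k term
  have keym : ∀ m ∈ Finset.univ.erase k,
      (∑ j ∈ Finset.univ.erase m,
          p j * (h j (a m)) ^ 2 / (p m * (h m (a m)) ^ 2) *
            ((s' m ⬝ᵥ s' j) ^ 2 - (s m ⬝ᵥ s j) ^ 2))
      = p k * (h k (a m)) ^ 2 / (p m * (h m (a m)) ^ 2) *
          ((w ⬝ᵥ s m) ^ 2 - (s k ⬝ᵥ s m) ^ 2) := by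
    intro m hm
    have hmk : m ≠ k := Finset.ne_of_mem_erase hm
    refine (Finset.sum_eq_single_of_mem k
      (Finset.mem_erase.2 ⟨hmk.symm, Finset.mem_univ k⟩) ?_).trans ?_
    · intro j hj hjk
      rw [hs'j m hmk, hs'j j hjk, sub_self, mul_zero]
    · rw [hs'j m hmk, hs'k, dotProduct_comm (s m) w, dotProduct_comm (s m) (s k)]
  -- the row m = k
  have keyk :
      (∑ j ∈ Finset.univ.erase k,
          p j * (h j (a k)) ^ 2 / (p k * (h k (a k)) ^ 2) *
            ((s' k ⬝ᵥ s' j) ^ 2 - (s k ⬝ᵥ s j) ^ 2))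
      = ∑ j ∈ Finset.univ.erase k,
          p j * (h j (a k)) ^ 2 / (p k * (h k (a k)) ^ 2) *
            ((w ⬝ᵥ s j) ^ 2 - (s k ⬝ᵥ s j) ^ 2) := by
    refine Finset.sum_congr rfl fun j hj => ?_
    rw [hs'k, hs'j j (Finset.ne_of_mem_erase hj)]
  -- compute the V-difference
  have hVdiff : V s' - V s =
      -∑ j ∈ Finset.univ.erase k,
        (p j * (h j (a k)) ^ 2 / (p k * (h k (a k)) ^ 2) +
          p k * (h k (a j)) ^ 2 / (p j * (h j (a j)) ^ 2)) *
          ((w ⬝ᵥ s j) ^ 2 - (s k ⬝ᵥ s j) ^ 2) := by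
    rw [hV, hV]
    have h1 : -(∑ m, (σ2 + ∑ j ∈ Finset.univ.erase m,
          p j * (h j (a m)) ^ 2 * (s' m ⬝ᵥ s' j) ^ 2) / (p m * (h m (a m)) ^ 2))
        - -(∑ m, (σ2 + ∑ j ∈ Finset.univ.erase m,
          p j * (h j (a m)) ^ 2 * (s m ⬝ᵥ s j) ^ 2) / (p m * (h m (a m)) ^ 2))
      = -∑ m, ((σ2 + ∑ j ∈ Finset.univ.erase m,
          p j * (h j (a m)) ^ 2 * (s' m ⬝ᵥ s' j) ^ 2) / (p m * (h m (a m)) ^ 2)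
        - (σ2 + ∑ j ∈ Finset.univ.erase m,
          p j * (h j (a m)) ^ 2 * (s m ⬝ᵥ s j) ^ 2) / (p m * (h m (a m)) ^ 2)) := by
      rw [Finset.sum_sub_distrib]; ring
    rw [h1]
    simp only [key]
    rw [← Finset.add_sum_erase _ _ (Finset.mem_univ k), keyk,
      Finset.sum_congr rfl keym]
    have h2 : ∑ j ∈ Finset.univ.erase k,
        p k * (h k (a j)) ^ 2 / (p j * (h j (a j)) ^ 2) *
          ((w ⬝ᵥ s j) ^ 2 - (s k ⬝ᵥ s j) ^ 2)
      = ∑ m ∈ Finset.univ.erase k,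
        p k * (h k (a m)) ^ 2 / (p m * (h m (a m)) ^ 2) *
          ((w ⬝ᵥ s m) ^ 2 - (s k ⬝ᵥ s m) ^ 2) := rfl
    simp only [add_mul]
    rw [Finset.sum_add_distrib, h2]
  -- compute the u-difference
  have hudiff : u k s' - u k s =
      -∑ j ∈ Finset.univ.erase k,
        (p j * (h j (a k)) ^ 2 / (p k * (h k (a k)) ^ 2) +
          p k * (h k (a j)) ^ 2 / (p j * (h j (a j)) ^ 2)) *
          ((w ⬝ᵥ s j) ^ 2 - (s k ⬝ᵥ s j) ^ 2) := by
    rw [hu, hu]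
    have h3 : ∑ j ∈ Finset.univ.erase k,
        (p j * (h j (a k)) ^ 2 / (p k * (h k (a k)) ^ 2) +
          p k * (h k (a j)) ^ 2 / (p j * (h j (a j)) ^ 2)) * (s' k ⬝ᵥ s' j) ^ 2
      = ∑ j ∈ Finset.univ.erase k,
        (p j * (h j (a k)) ^ 2 / (p k * (h k (a k)) ^ 2) +
          p k * (h k (a j)) ^ 2 / (p j * (h j (a j)) ^ 2)) * (w ⬝ᵥ s j) ^ 2 := by
      refine Finset.sum_congr rfl fun j hj => ?_
      rw [hs'k, hs'j j (Finset.ne_of_mem_erase hj)]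
    rw [h3, hs'k, hw, hs k]
    simp only [mul_sub]
    rw [Finset.sum_sub_distrib]
    ring
  rw [hVdiff, hudiff]
end

section
/- The total mean square error V = Σ_m ε_m², where ε_m² = 1 − 2√(p_m) h_{m,a(m)} d_mᵀ s_m + σ²‖d_m‖² + d_mᵀ(Σ_j p_j h_{j,a(m)}² s_j s_jᵀ) d_m, is an exact potential (up to sign) for the game in which player k maximizes −L(s_k, d_k) with L(s_k, d_k) = ε_k² + Σ_{ℓ≠k} p_k h_{k,a(ℓ)}² (d_ℓᵀ s_k)²: a unilateral change in (s_k, d_k) changes V by exactly the change in L. -/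
open Matrix Finset

/-- The total mean square error `V = Σ_m ε_m²`, with
`ε_m² = 1 − 2√(p_m) h_{m,a(m)} d_mᵀ s_m + σ²‖d_m‖² + d_mᵀ(Σ_j p_j h_{j,a(m)}² s_j s_jᵀ)d_m`,
is an exact potential (up to sign) for the game where player `k` maximizes
`−L(s_k,d_k)` with `L = ε_k² + Σ_{ℓ≠k} p_k h_{k,a(ℓ)}² (d_ℓᵀ s_k)²`: a unilateral
change of `(s_k, d_k)` changes `V` by exactly the change in `L`. -/
theorem TMSE_exact_potential
    {N K B : ℕ} (σ2 : ℝ) (hσ : 0 < σ2)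
    (p : Fin K → ℝ) (hp : ∀ j, 0 < p j)
    (h : Fin K → Fin B → ℝ) (hh : ∀ i j, 0 < h i j)
    (a : Fin K → Fin B)
    (ε2 : Fin K → (Fin K → Fin N → ℝ) → (Fin K → Fin N → ℝ) → ℝ)
    (hε : ∀ m s d, ε2 m s d =
      1 - 2 * Real.sqrt (p m) * h m (a m) * (d m ⬝ᵥ s m) + σ2 * (d m ⬝ᵥ d m) +
        ∑ j, p j * (h j (a m)) ^ 2 * (d m ⬝ᵥ s j) ^ 2)
    (V : (Fin K → Fin N → ℝ) → (Fin K → Fin N → ℝ) → ℝ)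
    (hV : ∀ s d, V s d = ∑ m, ε2 m s d)
    (L : Fin K → (Fin K → Fin N → ℝ) → (Fin K → Fin N → ℝ) → ℝ)
    (hL : ∀ k s d, L k s d = ε2 k s d +
      ∑ l ∈ Finset.univ.erase k, p k * (h k (a l)) ^ 2 * (d l ⬝ᵥ s k) ^ 2) :
    ∀ (k : Fin K) (s d : Fin K → Fin N → ℝ) (w v : Fin N → ℝ),
      V (Function.update s k w) (Function.update d k v) - V s d =
        L k (Function.update s k w) (Function.update d k v) - L k s d := by
  intro k s d w v
  have key : ∀ m : Fin K, m ≠ k →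
      ε2 m (Function.update s k w) (Function.update d k v) - ε2 m s d =
        p k * (h k (a m)) ^ 2 * ((d m ⬝ᵥ w) ^ 2 - (d m ⬝ᵥ s k) ^ 2) := by
    intro m hm
    rw [hε, hε, Function.update_of_ne hm, Function.update_of_ne hm]
    rw [← Finset.add_sum_erase _ _ (Finset.mem_univ k),
        ← Finset.add_sum_erase _ (fun j => p j * (h j (a m)) ^ 2 * (d m ⬝ᵥ s j) ^ 2)
          (Finset.mem_univ k)]
    have hsum : ∑ j ∈ Finset.univ.erase k,
        p j * (h j (a m)) ^ 2 * (d m ⬝ᵥ Function.update s k w j) ^ 2 =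
        ∑ j ∈ Finset.univ.erase k, p j * (h j (a m)) ^ 2 * (d m ⬝ᵥ s j) ^ 2 := by
      refine Finset.sum_congr rfl fun j hj => ?_
      rw [Function.update_of_ne (Finset.ne_of_mem_erase hj)]
    rw [hsum, Function.update_self]
    ring
  rw [hV, hV, hL, hL]
  rw [← Finset.add_sum_erase _ (fun m => ε2 m (Function.update s k w) (Function.update d k v))
        (Finset.mem_univ k),
      ← Finset.add_sum_erase _ (fun m => ε2 m s d) (Finset.mem_univ k)]
  have h1 : ∑ m ∈ Finset.univ.erase k, ε2 m (Function.update s k w) (Function.update d k v) -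
      ∑ m ∈ Finset.univ.erase k, ε2 m s d =
      ∑ m ∈ Finset.univ.erase k, p k * (h k (a m)) ^ 2 * ((d m ⬝ᵥ w) ^ 2 - (d m ⬝ᵥ s k) ^ 2) := by
    rw [← Finset.sum_sub_distrib]
    exact Finset.sum_congr rfl fun m hm => key m (Finset.ne_of_mem_erase hm)
  have h2 : ∑ l ∈ Finset.univ.erase k,
      p k * (h k (a l)) ^ 2 * (Function.update d k v l ⬝ᵥ Function.update s k w k) ^ 2 -
      ∑ l ∈ Finset.univ.erase k, p k * (h k (a l)) ^ 2 * (d l ⬝ᵥ s k) ^ 2 =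
      ∑ m ∈ Finset.univ.erase k, p k * (h k (a m)) ^ 2 * ((d m ⬝ᵥ w) ^ 2 - (d m ⬝ᵥ s k) ^ 2) := by
    rw [← Finset.sum_sub_distrib]
    refine Finset.sum_congr rfl fun l hl => ?_
    rw [Function.update_of_ne (Finset.ne_of_mem_erase hl), Function.update_self]
    ring
  linarith [h1, h2]
end

section
/- For the efficiency function f(γ) = (1 − e^{−γ})^M with integer M ≥ 2, the equation γ f'(γ) = f(γ) has a unique solution γ̄ > 0. -/
/-- For `x > 0`, the original equation is equivalent to `exp x = 1 + M x`. -/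
lemma eq_equiv (M : ℕ) (hM : 2 ≤ M) (x : ℝ) (hx : 0 < x) :
    (x * (M * Real.exp (-x) * (1 - Real.exp (-x)) ^ (M - 1)) =
        (1 - Real.exp (-x)) ^ M) ↔ Real.exp x = 1 + M * x := by
  have h1 : Real.exp (-x) < 1 := Real.exp_lt_one_iff.mpr (by linarith)
  have h2 : (0:ℝ) < 1 - Real.exp (-x) := by linarith
  have hne : (1 - Real.exp (-x)) ^ (M - 1) ≠ 0 := pow_ne_zero _ (ne_of_gt h2)
  have hpow : (1 - Real.exp (-x)) ^ M =
      (1 - Real.exp (-x)) * (1 - Real.exp (-x)) ^ (M - 1) := by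
    conv_lhs => rw [show M = (M - 1) + 1 by omega]
    rw [pow_succ]; ring
  rw [hpow]
  constructor
  · intro h
    have h3 : x * (M * Real.exp (-x)) = 1 - Real.exp (-x) := by
      have := mul_right_cancel₀ hne (by linarith [h] : x * (M * Real.exp (-x)) * (1 - Real.exp (-x)) ^ (M - 1) = (1 - Real.exp (-x)) * (1 - Real.exp (-x)) ^ (M - 1))
      exact this
    have hex : Real.exp (-x) = (Real.exp x)⁻¹ := Real.exp_neg x
    have hexpos : (0:ℝ) < Real.exp x := Real.exp_pos x
    rw [hex] at h3
    field_simp at h3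
    nlinarith [h3]
  · intro h
    have hex : Real.exp (-x) = (Real.exp x)⁻¹ := Real.exp_neg x
    have hexpos : (0:ℝ) < Real.exp x := Real.exp_pos x
    have h3 : x * (M * Real.exp (-x)) = 1 - Real.exp (-x) := by
      rw [hex]; field_simp; nlinarith [h]
    calc x * (M * Real.exp (-x) * (1 - Real.exp (-x)) ^ (M - 1))
        = (x * (M * Real.exp (-x))) * (1 - Real.exp (-x)) ^ (M - 1) := by ring
      _ = (1 - Real.exp (-x)) * (1 - Real.exp (-x)) ^ (M - 1) := by rw [h3]

/-- Existence and uniqueness of positive root of `exp x = 1 + M x`. -/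
lemma exp_eq_unique (M : ℕ) (hM : 2 ≤ M) :
    ∃! x : ℝ, 0 < x ∧ Real.exp x = 1 + M * x := by
  have hM2 : (2:ℝ) ≤ M := by exact_mod_cast hM
  -- existence via IVT on [1, 3M]
  have hcont : ContinuousOn (fun x : ℝ => Real.exp x - 1 - M * x) (Set.Icc 1 (3 * M)) := by
    fun_prop
  have h1 : Real.exp 1 - 1 - M * 1 < 0 := by
    have := Real.exp_one_lt_d9
    nlinarith
  have h3M : 0 < Real.exp (3 * (M:ℝ)) - 1 - M * (3 * M) := by
    have hMpos : (0:ℝ) < M := by linarith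
    have h := Real.add_one_lt_exp (by positivity : (M:ℝ) ≠ 0)
    have h3 : Real.exp (3 * (M:ℝ)) = (Real.exp M) ^ 3 := by
      rw [← Real.exp_nat_mul]; norm_num [mul_comm]
    have hcube : (1 + (M:ℝ)) ^ 3 < (Real.exp M) ^ 3 := by
      apply pow_lt_pow_left₀ (by linarith) (by positivity)
      norm_num
    rw [h3]
    nlinarith [hcube, hMpos, sq_nonneg ((M:ℝ)), mul_pos hMpos hMpos]
  have hle : (1:ℝ) ≤ 3 * M := by linarith
  have hiv := intermediate_value_Ioo hle hcont
  have hmem : (0:ℝ) ∈ Set.Ioo (Real.exp 1 - 1 - M * 1) (Real.exp (3 * (M:ℝ)) - 1 - M * (3 * M)) :=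
    ⟨h1, h3M⟩
  obtain ⟨c, hc, hc0⟩ := hiv hmem
  refine ⟨c, ⟨by linarith [hc.1], by simp at hc0; linarith [hc0]⟩, ?_⟩
  -- uniqueness: strict convexity of exp
  rintro y ⟨hy, hey⟩
  have hcpos : 0 < c := by linarith [hc.1]
  have hce : Real.exp c = 1 + M * c := by simp at hc0; linarith
  by_contra hne
  -- key: any two distinct positive roots give contradiction via strict convexity with 0
  have key : ∀ a b : ℝ, 0 < a → a < b → Real.exp a = 1 + M * a →
      Real.exp b = 1 + M * b → False := by
    intro a b ha hab hea heb
    have hb : 0 < b := lt_trans ha hab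
    have ht : (0:ℝ) < 1 - a / b := by
      rw [sub_pos, div_lt_one hb]; exact hab
    have hs : (0:ℝ) < a / b := by positivity
    have hsum : (1 - a / b) + a / b = 1 := by ring
    have hconv := strictConvexOn_exp.2 (Set.mem_univ (0:ℝ)) (Set.mem_univ b)
      (by linarith : (0:ℝ) ≠ b) ht hs hsum
    simp only [smul_eq_mul, mul_zero, zero_add, Real.exp_zero, mul_one] at hconv
    have hab' : a / b * b = a := by field_simp
    rw [hab'] at hconv
    rw [hea, heb] at hconv
    have : a / b * (1 + M * b) = a / b + M * a := by
      field_simp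
    rw [this] at hconv
    have : (1 - a/b) + (a/b + M*a) = 1 + M*a := by ring
    linarith [hconv]
  rcases lt_or_gt_of_ne (Ne.symm hne) with h | h
  · exact absurd (key c y hcpos h hce hey) (fun f => f)
  · exact absurd (key y c hy h hey hce) (fun f => f)

/-- For the efficiency function `f(γ) = (1 − e^{−γ})^M` with integer
`M ≥ 2`, the equation `γ f'(γ) = f(γ)` has a unique solution `γ̄ > 0`. -/
theorem efficiency_function_unique_positive_root (M : ℕ) (hM : 2 ≤ M) :
    ∃! x : ℝ, 0 < x ∧
      x * (M * Real.exp (-x) * (1 - Real.exp (-x)) ^ (M - 1)) =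
        (1 - Real.exp (-x)) ^ M := by
  obtain ⟨c, ⟨hc, hce⟩, huniq⟩ := exp_eq_unique M hM
  refine ⟨c, ⟨hc, (eq_equiv M hM c hc).mpr hce⟩, ?_⟩
  rintro y ⟨hy, hey⟩
  exact huniq y ⟨hy, (eq_equiv M hM y hy).mp hey⟩
end

section
/- For f(γ) = (1 − e^{−γ})^M with M ≥ 2 and fixed α > 0, the energy efficiency function u(p) = f(α p)/p on (0, ∞) attains its maximum uniquely at p* = γ̄/α, where γ̄ is the unique positive solution of γ f'(γ) = f(γ). -/
/-!
With γ = α p we have u p = α · f(γ)/γ, so it suffices to maximise f(γ)/γ over γ > 0. Its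
derivative has the sign of ψ(γ) = Mγ − e^γ + 1, and the stationarity condition says ψ(γ̄) = 0.
Since ψ is strictly concave with ψ(0) = 0, it is positive on (0, γ̄) and negative beyond γ̄, so
f(γ)/γ increases strictly up to γ̄ and decreases strictly after it.
-/

open Real Set

noncomputable def efficiency (M : ℕ) (γ : ℝ) : ℝ := (1 - exp (-γ)) ^ M / γ

/-- `γ f'(γ) − f(γ) = (1 − e^{−γ})^{M−1} e^{−γ} · stationarityGap M γ`. -/
noncomputable def stationarityGap (M : ℕ) (γ : ℝ) : ℝ := M * γ - exp γ + 1

theorem apply_lt_apply_of_hasDerivAt_sign_change {g g' : ℝ → ℝ} {a c y : ℝ}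
    (hg : ∀ x, a < x → HasDerivAt g (g' x) x) (hpos : ∀ x ∈ Ioo a c, 0 < g' x)
    (hneg : ∀ x, c < x → g' x < 0) (hac : a < c) (hy : a < y) (hyc : y ≠ c) : g y < g c := by
  have hcont : ContinuousOn g (Ioi a) := fun x hx => (hg x hx).continuousAt.continuousWithinAt
  rcases hyc.lt_or_gt with hlt | hgt
  · have hmono : StrictMonoOn g (Ioc a c) :=
      strictMonoOn_of_hasDerivWithinAt_pos (convex_Ioc a c) (hcont.mono Ioc_subset_Ioi_self)
        (fun x hx => by rw [interior_Ioc] at hx; exact (hg x hx.1).hasDerivWithinAt)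
        (fun x hx => by rw [interior_Ioc] at hx; exact hpos x hx)
    exact hmono ⟨hy, hlt.le⟩ ⟨hac, le_rfl⟩ hlt
  · have hanti : StrictAntiOn g (Ici c) :=
      strictAntiOn_of_hasDerivWithinAt_neg (convex_Ici c)
        (hcont.mono fun x hx => hac.trans_le hx)
        (fun x hx => by rw [interior_Ici] at hx; exact (hg x (hac.trans hx)).hasDerivWithinAt)
        (fun x hx => by rw [interior_Ici] at hx; exact hneg x hx)
    exact hanti self_mem_Ici hgt.le hgt

theorem StrictConcaveOn.pos_of_mem_Ioo_of_eq_zero {s : Set ℝ} {φ : ℝ → ℝ} {a c x : ℝ}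
    (hφ : StrictConcaveOn ℝ s φ) (ha : a ∈ s) (hc : c ∈ s) (hφa : φ a = 0) (hφc : φ c = 0)
    (hx : x ∈ Ioo a c) : 0 < φ x := by
  have hac := hx.1.trans hx.2
  have := hφ.lt_on_openSegment ha hc hac.ne (by rwa [openSegment_eq_Ioo hac])
  simpa [hφa, hφc] using this

theorem StrictConcaveOn.neg_of_lt_of_eq_zero {s : Set ℝ} {φ : ℝ → ℝ} {a c x : ℝ}
    (hφ : StrictConcaveOn ℝ s φ) (ha : a ∈ s) (hx : x ∈ s) (hφa : φ a = 0) (hφc : φ c = 0)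
    (hac : a < c) (hcx : c < x) : φ x < 0 := by
  have := hφ.lt_on_openSegment ha hx (hac.trans hcx).ne
    (by rw [openSegment_eq_Ioo (hac.trans hcx)]; exact ⟨hac, hcx⟩)
  simpa [hφa, hφc] using this

theorem strictConcaveOn_stationarityGap (M : ℕ) : StrictConcaveOn ℝ univ (stationarityGap M) := by
  have hlin : ConcaveOn ℝ univ fun γ : ℝ => (M : ℝ) * γ + 1 :=
    ((concaveOn_id convex_univ).smul (Nat.cast_nonneg M)).add_const 1
  have hgap : stationarityGap M = -exp + fun γ => (M : ℝ) * γ + 1 := by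
    ext γ; simp only [stationarityGap, Pi.add_apply, Pi.neg_apply]; ring
  rw [hgap]
  exact strictConvexOn_exp.neg.add_concaveOn hlin

theorem one_sub_exp_neg_pos {x : ℝ} (hx : 0 < x) : 0 < 1 - exp (-x) :=
  sub_pos.2 (exp_lt_one_iff.2 (neg_lt_zero.2 hx))

theorem hasDerivAt_efficiency {M : ℕ} (hM : M ≠ 0) {x : ℝ} (hx : x ≠ 0) :
    HasDerivAt (efficiency M)
      ((1 - exp (-x)) ^ (M - 1) * exp (-x) * stationarityGap M x / x ^ 2) x := by
  have hbase : HasDerivAt (fun γ => 1 - exp (-γ)) (exp (-x)) x := by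
    simpa using ((hasDerivAt_neg x).exp).const_sub 1
  refine ((hbase.pow M).div (hasDerivAt_id x) hx).congr_deriv ?_
  have hinv : exp (-x) * exp x = 1 := by rw [← exp_add, neg_add_cancel, exp_zero]
  simp only [Pi.pow_apply, id, mul_one]
  rw [← pow_sub_one_mul hM, stationarityGap]
  linear_combination (1 - exp (-x)) ^ (M - 1) * hinv / x ^ 2

theorem stationarityGap_eq_zero {M : ℕ} (hM : M ≠ 0) {γ : ℝ} (hγ : 0 < γ)
    (h : γ * (M * exp (-γ) * (1 - exp (-γ)) ^ (M - 1)) = (1 - exp (-γ)) ^ M) :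
    stationarityGap M γ = 0 := by
  rw [← pow_sub_one_mul hM] at h
  have hγM : γ * M * exp (-γ) = 1 - exp (-γ) :=
    mul_right_cancel₀ (pow_pos (one_sub_exp_neg_pos hγ) (M - 1)).ne' (by linear_combination h)
  have hinv : exp (-γ) * exp γ = 1 := by rw [← exp_add, neg_add_cancel, exp_zero]
  rw [stationarityGap]
  linear_combination exp γ * hγM - (γ * M + 1) * hinv

theorem efficiency_lt_of_ne {M : ℕ} (hM : M ≠ 0) {c y : ℝ} (hc : 0 < c)
    (hgap : stationarityGap M c = 0) (hy : 0 < y) (hyc : y ≠ c) :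
    efficiency M y < efficiency M c := by
  have hconcave := strictConcaveOn_stationarityGap M
  have hgap0 : stationarityGap M 0 = 0 := by simp [stationarityGap]
  refine apply_lt_apply_of_hasDerivAt_sign_change (fun x hx => hasDerivAt_efficiency hM hx.ne')
    (fun x hx => ?_) (fun x hx => ?_) hc hy hyc
  · have hpos := hconcave.pos_of_mem_Ioo_of_eq_zero (mem_univ 0) (mem_univ c) hgap0 hgap hx
    have hbase := one_sub_exp_neg_pos hx.1
    exact div_pos (mul_pos (by positivity) hpos) (pow_pos hx.1 2)
  · have hx0 := hc.trans hx
    have hneg := hconcave.neg_of_lt_of_eq_zero (mem_univ 0) (mem_univ x) hgap0 hgap hc hx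
    have hbase := one_sub_exp_neg_pos hx0
    exact div_neg_of_neg_of_pos (mul_neg_of_pos_of_neg (by positivity) hneg) (by positivity)

/-- For `f(γ) = (1 − e^{−γ})^M`, `M ≥ 2`, and fixed `α > 0`, the
energy-efficiency function `u(p) = f(αp)/p` on `(0,∞)` attains its maximum uniquely
at `p* = γ̄/α`, where `γ̄` is the unique positive solution of `γ f'(γ) = f(γ)`. -/
theorem energy_efficiency_unique_maximizer
    (M : ℕ) (hM : 2 ≤ M) (α : ℝ) (hα : 0 < α) (γbar : ℝ)
    (hγ : 0 < γbar ∧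
      γbar * (M * Real.exp (-γbar) * (1 - Real.exp (-γbar)) ^ (M - 1)) =
        (1 - Real.exp (-γbar)) ^ M)
    (u : ℝ → ℝ) (hu : ∀ p, u p = (1 - Real.exp (-(α * p))) ^ M / p) :
    ∀ p : ℝ, 0 < p → p ≠ γbar / α → u p < u (γbar / α) := by
  obtain ⟨hγpos, hstationary⟩ := hγ
  have hM0 : M ≠ 0 := by omega
  have hscale : ∀ p, u p = α * efficiency M (α * p) := fun p => by
    rw [hu, efficiency]
    field_simp
  intro p hp hne
  have hαp : α * p ≠ γbar := fun h => hne (by rw [← h, mul_div_cancel_left₀ p hα.ne'])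
  rw [hscale, hscale, mul_div_cancel₀ γbar hα.ne']
  exact mul_lt_mul_of_pos_left (efficiency_lt_of_ne hM0 hγpos
    (stationarityGap_eq_zero hM0 hγpos hstationary) (mul_pos hα hp) hαp) hα
end
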